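/- Let G = (ℝ^d, ·) be a group with polynomial multiplication and inversion and identity 0, whose left translations preserve Lebesgue measure, and let (δ_t)_{t>0} with δ_t(u) = (t^{1/β₁}u₁,…,t^{1/β_d}u_d), β_i ∈ (0,2), be an approximate group dilation structure for G with limit law ∙; assume that every left ∙-translation y ↦ x∙y also preserves Lebesgue measure. Let β ≥ max_i β_i and let ‖·‖ : ℝ^d → [0,∞) be a continuous function with ‖x∙y‖ ≤ ‖x‖ + ‖y‖, ‖x∙⁻¹‖ = ‖x‖, ‖x‖ = 0 if and only if x = 0, and ‖δ_t(u)‖ = t^{1/β}‖u‖ for all t > 0. Let Γ be a discrete subgroup of G possessing a compact fundamental domain U (the translates γ·U, γ ∈ Γ, cover ℝ^d and any two distinct translates intersect in a Lebesgue-null set), and set c(Γ,G) := Leb(U). For t > 0 put Γ_t := δ_{1/t}(Γ) and, for a finite set A ⊆ ℝ^d, m_t(A) := c(Γ,G)·t^{-(1/β₁+⋯+1/β_d)}·#A. Then for every x ∈ ℝ^d and every r ≥ 0, letting B(r) := {z ∈ ℝ^d : ‖z‖ < r} and B∙(x,r) := x∙B(r), one has lim_{t→∞} m_t(B∙(x,r)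 ∩ Γ_t) = Leb(B∙(x,r)). -/

import Mathlib

open Filter Topology MeasureTheory

noncomputable section

/-- Straight dilation with exponents `a`: `(dil a t u) i = t ^ (a i) * u i`. -/
def dil {d : ℕ} (a : Fin d → ℝ) (t : ℝ) (u : Fin d → ℝ) : Fin d → ℝ :=
  fun i => t ^ a i * u i

/-- A group structure on `ℝ^d` with identity `0` whose multiplication and inversion are
given coordinatewise by real polynomial functions of the coordinates. -/
structure PolyGroup (d : ℕ) where
  mul : (Fin d → ℝ) → (Fin d → ℝ) → (Fin d → ℝ)
  inv : (Fin d → ℝ) → (Fin d → ℝ)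
  mul_assoc' : ∀ x y z, mul (mul x y) z = mul x (mul y z)
  mul_zero' : ∀ x, mul x 0 = x
  zero_mul' : ∀ x, mul 0 x = x
  mul_inv' : ∀ x, mul x (inv x) = 0
  inv_mul' : ∀ x, mul (inv x) x = 0
  poly_mul : ∀ i, ∃ p : MvPolynomial (Fin d ⊕ Fin d) ℝ,
    ∀ x y, mul x y i = MvPolynomial.eval (Sum.elim x y) p
  poly_inv : ∀ i, ∃ p : MvPolynomial (Fin d) ℝ,
    ∀ x, inv x i = MvPolynomial.eval x p

/-- Euclidean norm on `ℝ^d`. -/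
def eucNorm {d : ℕ} (x : Fin d → ℝ) : ℝ := Real.sqrt (∑ i, x i ^ 2)

/-- A straight approximate group dilation structure for `G`, with the limit law `bullet`
and limit inverse `bulletInv`. -/
structure ApproxDil (d : ℕ) (G : PolyGroup d) where
  a : Fin d → ℝ
  a_pos : ∀ i, 0 < a i
  bulletInv : (Fin d → ℝ) → (Fin d → ℝ)
  bullet : (Fin d → ℝ) → (Fin d → ℝ) → (Fin d → ℝ)
  tendsto_inv : ∀ x,
    Tendsto (fun t : ℝ => dil a t⁻¹ (G.inv (dil a t x))) atTop (𝓝 (bulletInv x))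
  tendsto_mul : ∀ x y,
    Tendsto (fun t : ℝ => dil a t⁻¹ (G.mul (dil a t x) (dil a t y))) atTop (𝓝 (bullet x y))

/-!
Write `Φ_t(z, w) := δ_{1/t}(δ_t z · δ_t w)`. Each coordinate of `Φ_t` lies in a fixed
finite-dimensional space of polynomial functions, on which pointwise convergence is locally
uniform; hence `Φ_t → ∙` locally uniformly, `∙` is continuous, and `Φ_t(z, w)` is uniformly close
to `z` for `z` in a compact set, `t` large and `w` small. Since
`δ_{1/t}(γ · u) = Φ_t(δ_{1/t} γ, δ_{1/t} u)` and `δ_{1/t} U` shrinks to `0`, for every `ε > 0` and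
all large `t` the translates `γ · U` with `δ_{1/t} γ ∈ B∙(x, r)` lie in `δ_t B∙(x, r + ε)` and
cover `δ_t B∙(x, r - ε)`. These translates are almost disjoint of volume `Leb(U)`, so `m_t` is
squeezed between `Leb(B∙(x, r - ε))` and `Leb(B∙(x, r + ε))`, and by the homogeneity of `‖·‖`
both tend to `Leb(B∙(x, r))` as `ε → 0`.
-/

open Set Metric

theorem tendstoLocallyUniformly_pi {α β ι : Type*} [TopologicalSpace β] [Fintype ι]
    {π : ι → Type*} [∀ i, PseudoMetricSpace (π i)] {F : α → β → ∀ i, π i} {f : β → ∀ i, π i}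
    {l : Filter α} (h : ∀ i, TendstoLocallyUniformly (fun a x => F a x i) (fun x => f x i) l) :
    TendstoLocallyUniformly F f l := by
  simp only [Metric.tendstoLocallyUniformly_iff] at h ⊢
  intro ε hε x
  choose s hs hev using fun i => h i ε hε x
  refine ⟨⋂ i, s i, iInter_mem.2 hs, ?_⟩
  filter_upwards [eventually_all.2 hev] with n hn y hy
  exact (dist_pi_lt_iff hε).2 fun i => hn i y (mem_iInter.1 hy i)

theorem IsCompact.exists_forall_dist_lt_of_continuous {X Y : Type*} [PseudoMetricSpace X]
    [PseudoMetricSpace Y] {K : Set X} (hK : IsCompact K) {f : X → Y} (hf : Continuous f)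
    {ε : ℝ} (hε : 0 < ε) : ∃ η > 0, ∀ z ∈ K, ∀ y, dist y z < η → dist (f y) (f z) < ε := by
  obtain ⟨η, hη, h⟩ := mem_uniformity_dist.1 <|
    hK.uniformContinuousAt_of_continuousAt f (fun _ _ => hf.continuousAt) (dist_mem_uniformity hε)
  exact ⟨η, hη, fun z hz y hy => dist_comm (f z) (f y) ▸ h (dist_comm y z ▸ hy) hz⟩

theorem tendsto_of_forall_eventually_le_of_continuousAt {α : Type*} {l : Filter α} {f : α → ℝ}
    {V : ℝ → ℝ} {r : ℝ} (hV : ContinuousAt V r)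
    (h : ∀ ε > 0, ∀ᶠ a in l, V (r - ε) ≤ f a ∧ f a ≤ V (r + ε)) : Tendsto f l (𝓝 (V r)) := by
  refine tendsto_order.2 ⟨fun b hb => ?_, fun b hb => ?_⟩
  · obtain ⟨δ, hδ, hVδ⟩ := Metric.eventually_nhds_iff.1 (hV.eventually (lt_mem_nhds hb))
    filter_upwards [h (δ / 2) (half_pos hδ)] with a ha
    refine (hVδ ?_).trans_le ha.1
    rw [Real.dist_eq, sub_sub_cancel_left, abs_neg, abs_of_pos (half_pos hδ)]
    exact half_lt_self hδ
  · obtain ⟨δ, hδ, hVδ⟩ := Metric.eventually_nhds_iff.1 (hV.eventually (gt_mem_nhds hb))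
    filter_upwards [h (δ / 2) (half_pos hδ)] with a ha
    refine ha.2.trans_lt (hVδ ?_)
    rw [Real.dist_eq, add_sub_cancel_left, abs_of_pos (half_pos hδ)]
    exact half_lt_self hδ

theorem tendstoLocallyUniformly_of_tendsto_of_mem_finiteDimensional {α X : Type*}
    [TopologicalSpace X] [LocallyCompactSpace X] {V : Submodule ℝ (X → ℝ)}
    [FiniteDimensional ℝ V] (hV : ∀ f ∈ V, Continuous f) {F : α → X → ℝ} {f : X → ℝ}
    {l : Filter α} [l.NeBot] (hFV : ∀ a, F a ∈ V) (hF : Tendsto F l (𝓝 f)) :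
    TendstoLocallyUniformly F f l := by
  have hf : f ∈ V := V.closed_of_finiteDimensional.mem_of_tendsto hF (.of_forall hFV)
  let T : V →ₗ[ℝ] C(X, ℝ) :=
    { toFun := fun g => ⟨g, hV g g.2⟩
      map_add' := fun _ _ => rfl
      map_smul' := fun _ _ => rfl }
  have hT : Tendsto (fun a => T ⟨F a, hFV a⟩) l (𝓝 (T ⟨f, hf⟩)) :=
    T.continuous_of_finiteDimensional.continuousAt.tendsto.comp (tendsto_subtype_rng.2 hF)
  exact ContinuousMap.tendsto_iff_tendstoLocallyUniformly.1 hT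

theorem MvPolynomial.eval_mul_eq_sum {R ι : Type*} [CommSemiring R] [Fintype ι]
    (p : MvPolynomial ι R) (s v : ι → R) :
    eval (fun j => s j * v j) p =
      ∑ m ∈ p.support, (p.coeff m * ∏ j, s j ^ m j) * ∏ j, v j ^ m j := by
  simp only [eval_eq', mul_pow, Finset.prod_mul_distrib, mul_assoc]

theorem tendstoLocallyUniformly_mul_eval_mul {α ι : Type*} [Fintype ι] (p : MvPolynomial ι ℝ)
    (c : α → ℝ) (s : α → ι → ℝ) {f : (ι → ℝ) → ℝ} {l : Filter α} [l.NeBot]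
    (h : ∀ v, Tendsto (fun a => c a * MvPolynomial.eval (fun j => s a j * v j) p) l (𝓝 (f v))) :
    TendstoLocallyUniformly (fun a v => c a * MvPolynomial.eval (fun j => s a j * v j) p) f l := by
  classical
  set monomialFun : (ι →₀ ℕ) → (ι → ℝ) → ℝ := fun m v => ∏ j, v j ^ m j
  set V := Submodule.span ℝ (monomialFun '' p.support)
  have : FiniteDimensional ℝ V :=
    FiniteDimensional.span_of_finite ℝ (p.support.finite_toSet.image _)
  refine tendstoLocallyUniformly_of_tendsto_of_mem_finiteDimensional (V := V) (fun g hg => ?_)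
    (fun a => ?_) (tendsto_pi_nhds.2 h)
  · induction hg using Submodule.span_induction with
    | mem g hg => obtain ⟨m, -, rfl⟩ := hg; fun_prop
    | zero => exact continuous_zero
    | add g g' _ _ hg hg' => exact hg.add hg'
    | smul r g _ hg => exact hg.const_smul r
  · have : (fun v => c a * MvPolynomial.eval (fun j => s a j * v j) p) =
        ∑ m ∈ p.support, (c a * (p.coeff m * ∏ j, s a j ^ m j)) • monomialFun m := by
      funext v
      simp [MvPolynomial.eval_mul_eq_sum, Finset.mul_sum, monomialFun, mul_assoc]
    rw [this]
    exact Submodule.sum_mem _ fun m hm =>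
      Submodule.smul_mem _ _ (Submodule.subset_span ⟨m, hm, rfl⟩)

section Dilation

variable {d : ℕ} {a : Fin d → ℝ} {t : ℝ}

theorem dil_zero (a : Fin d → ℝ) (t : ℝ) : dil a t 0 = 0 := by
  funext i
  simp [dil]

theorem dil_dil_inv (ht : 0 < t) (u : Fin d → ℝ) : dil a t (dil a t⁻¹ u) = u := by
  funext i
  simp only [dil, ← mul_assoc, Real.inv_rpow ht.le,
    mul_inv_cancel₀ (Real.rpow_pos_of_pos ht _).ne', one_mul]

theorem dil_inv_dil (ht : 0 < t) (u : Fin d → ℝ) : dil a t⁻¹ (dil a t u) = u := by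
  funext i
  simp only [dil, ← mul_assoc, Real.inv_rpow ht.le,
    inv_mul_cancel₀ (Real.rpow_pos_of_pos ht _).ne', one_mul]

theorem continuous_dil (a : Fin d → ℝ) (t : ℝ) : Continuous (dil a t) :=
  continuous_pi fun i => continuous_const.mul (continuous_apply i)

theorem preimage_dil_inv (ht : 0 < t) (A : Set (Fin d → ℝ)) : dil a t⁻¹ ⁻¹' A = dil a t '' A :=
  (congrFun (image_eq_preimage_of_inverse (dil_inv_dil ht) (dil_dil_inv ht)) A).symm

theorem ncard_setOf_inter_image_dil_inv (ht : 0 < t) (P : (Fin d → ℝ) → Prop)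
    (Γ : Set (Fin d → ℝ)) :
    ({y | P y} ∩ dil a t⁻¹ '' Γ).ncard = {γ ∈ Γ | P (dil a t⁻¹ γ)}.ncard := by
  rw [inter_comm, ← image_inter_preimage,
    ncard_image_of_injective _ (Function.LeftInverse.injective (dil_dil_inv ht))]
  rfl

theorem measureReal_image_dil (ht : 0 < t) (A : Set (Fin d → ℝ)) :
    volume.real (dil a t '' A) = t ^ (∑ i, a i) * volume.real A := by
  have hlin : dil a t = ⇑(Matrix.toLin' (Matrix.diagonal fun i => t ^ a i)) := by
    funext u i
    rw [Matrix.toLin'_apply, Matrix.mulVec_diagonal]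
    rfl
  rw [measureReal_def, measureReal_def, hlin, Measure.addHaar_image_linearMap,
    LinearMap.det_toLin', Matrix.det_diagonal, ← Real.rpow_sum_of_pos ht,
    abs_of_pos (Real.rpow_pos_of_pos ht _), ENNReal.toReal_mul,
    ENNReal.toReal_ofReal (Real.rpow_pos_of_pos ht _).le]

theorem tendsto_image_dil_inv_smallSets (ha : ∀ i, 0 < a i) {K : Set (Fin d → ℝ)}
    (hK : IsCompact K) : Tendsto (fun t => dil a t⁻¹ '' K) atTop (𝓝 0).smallSets := by
  obtain ⟨C, hC⟩ := hK.isBounded.exists_norm_le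
  rw [tendsto_smallSets_iff]
  intro W hW
  obtain ⟨ρ, hρ, hball⟩ := Metric.mem_nhds_iff.1 hW
  have hcoord : ∀ i, ∀ᶠ t : ℝ in atTop, t⁻¹ ^ a i * C < ρ := fun i => by
    have hlim : Tendsto (fun t : ℝ => t⁻¹ ^ a i * C) atTop (𝓝 (0 ^ a i * C)) :=
      (tendsto_inv_atTop_zero.rpow_const (Or.inr (ha i).le)).mul_const C
    rw [Real.zero_rpow (ha i).ne', zero_mul] at hlim
    exact hlim.eventually (gt_mem_nhds hρ)
  filter_upwards [eventually_all.2 hcoord, eventually_gt_atTop 0] with t ht ht0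
  rintro _ ⟨u, hu, rfl⟩
  refine hball (mem_ball_zero_iff.2 ((pi_norm_lt_iff hρ).2 fun i => ?_))
  calc ‖dil a t⁻¹ u i‖ = t⁻¹ ^ a i * ‖u i‖ := by
        rw [dil, norm_mul, Real.norm_of_nonneg (by positivity)]
    _ ≤ t⁻¹ ^ a i * C := by gcongr; exact (norm_le_pi_norm u i).trans (hC u hu)
    _ < ρ := ht i

theorem finite_sep_dil_inv_lt {Γ : Set (Fin d → ℝ)}
    (hΓdisc : ∀ K : Set (Fin d → ℝ), IsCompact K → (Γ ∩ K).Finite) {ψ : (Fin d → ℝ) → ℝ}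
    {r : ℝ} (hr : IsCompact {y | ψ y ≤ r}) (ht : 0 < t) :
    {γ ∈ Γ | ψ (dil a t⁻¹ γ) < r}.Finite :=
  (hΓdisc _ (hr.image (continuous_dil a t))).subset fun γ hγ =>
    ⟨hγ.1, by rw [← preimage_dil_inv ht]; exact hγ.2.le⟩

end Dilation

namespace PolyGroup

variable {d : ℕ} (G : PolyGroup d)

theorem continuous_mul : Continuous fun q : (Fin d → ℝ) × (Fin d → ℝ) => G.mul q.1 q.2 :=
  continuous_pi fun i => by
    obtain ⟨p, hp⟩ := G.poly_mul i
    simp_rw [hp]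
    exact (MvPolynomial.continuous_eval p).comp
      (Homeomorph.sumArrowHomeomorphProdArrow (ι := Fin d) (ι' := Fin d) (X := ℝ)).symm.continuous

theorem continuous_inv : Continuous G.inv :=
  continuous_pi fun i => by
    obtain ⟨p, hp⟩ := G.poly_inv i
    simp_rw [hp]
    exact MvPolynomial.continuous_eval p

theorem image_mul (γ : Fin d → ℝ) (U : Set (Fin d → ℝ)) :
    (fun y => G.mul γ y) '' U = (fun y => G.mul (G.inv γ) y) ⁻¹' U :=
  congrFun (image_eq_preimage_of_inverse
    (fun u => by simp only [← G.mul_assoc', G.inv_mul', G.zero_mul'])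
    (fun u => by simp only [← G.mul_assoc', G.mul_inv', G.zero_mul'])) U

theorem measurableSet_image_mul
    (hHaar : ∀ x, MeasurePreserving (fun y => G.mul x y) volume volume) (γ : Fin d → ℝ)
    {U : Set (Fin d → ℝ)} (hU : MeasurableSet U) : MeasurableSet ((fun y => G.mul γ y) '' U) := by
  rw [G.image_mul]
  exact hU.preimage (hHaar _).measurable

theorem volume_image_mul (hHaar : ∀ x, MeasurePreserving (fun y => G.mul x y) volume volume)
    (γ : Fin d → ℝ) {U : Set (Fin d → ℝ)} (hU : MeasurableSet U) :
    volume ((fun y => G.mul γ y) '' U) = volume U := by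
  rw [G.image_mul, (hHaar _).measure_preimage hU.nullMeasurableSet]

theorem ncard_mul_measureReal_le
    (hHaar : ∀ x, MeasurePreserving (fun y => G.mul x y) volume volume)
    {Γ U : Set (Fin d → ℝ)} (hU : MeasurableSet U) (hUfin : volume U ≠ ⊤)
    (hUdisj : ∀ γ ∈ Γ, ∀ γ' ∈ Γ, γ ≠ γ' →
      volume (((fun y => G.mul γ y) '' U) ∩ ((fun y => G.mul γ' y) '' U)) = 0)
    {F : Set (Fin d → ℝ)} (hF : F.Finite) (hFΓ : F ⊆ Γ) {W : Set (Fin d → ℝ)}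
    (hW : volume W ≠ ⊤) (hFW : ∀ γ ∈ F, (fun y => G.mul γ y) '' U ⊆ W) :
    F.ncard * volume.real U ≤ volume.real W := by
  calc F.ncard * volume.real U
      = ∑ γ ∈ hF.toFinset, volume.real ((fun y => G.mul γ y) '' U) := by
        simp [measureReal_def, G.volume_image_mul hHaar _ hU, ncard_eq_toFinset_card F hF]
    _ = volume.real (⋃ γ ∈ hF.toFinset, (fun y => G.mul γ y) '' U) := by
        refine (measureReal_biUnion_finset₀ (fun γ hγ γ' hγ' hne => ?_)
          (fun γ _ => (G.measurableSet_image_mul hHaar γ hU).nullMeasurableSet)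
          fun γ _ => G.volume_image_mul hHaar γ hU ▸ hUfin).symm
        simp only [Finite.coe_toFinset] at hγ hγ'
        exact hUdisj γ (hFΓ hγ) γ' (hFΓ hγ') hne
    _ ≤ volume.real W :=
        measureReal_mono (iUnion₂_subset fun γ hγ => hFW γ (hF.mem_toFinset.1 hγ)) hW

theorem measureReal_le_ncard_mul
    (hHaar : ∀ x, MeasurePreserving (fun y => G.mul x y) volume volume)
    {U : Set (Fin d → ℝ)} (hU : MeasurableSet U) (hUfin : volume U ≠ ⊤)
    {F : Set (Fin d → ℝ)} (hF : F.Finite) {W : Set (Fin d → ℝ)}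
    (hWF : W ⊆ ⋃ γ ∈ F, (fun y => G.mul γ y) '' U) :
    volume.real W ≤ F.ncard * volume.real U := by
  calc volume.real W ≤ volume.real (⋃ γ ∈ hF.toFinset, (fun y => G.mul γ y) '' U) :=
        measureReal_mono (by simpa using hWF)
          (measure_biUnion_lt_top hF.toFinset.finite_toSet fun γ _ =>
            G.volume_image_mul hHaar γ hU ▸ hUfin.lt_top).ne
    _ ≤ ∑ γ ∈ hF.toFinset, volume.real ((fun y => G.mul γ y) '' U) :=
        measureReal_biUnion_finset_le _ _
    _ = F.ncard * volume.real U := by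
        simp [measureReal_def, G.volume_image_mul hHaar _ hU, ncard_eq_toFinset_card F hF]

end PolyGroup

namespace ApproxDil

variable {d : ℕ} {G : PolyGroup d} (D : ApproxDil d G)

def rescaledMul (t : ℝ) (q : (Fin d → ℝ) × (Fin d → ℝ)) : Fin d → ℝ :=
  dil D.a t⁻¹ (G.mul (dil D.a t q.1) (dil D.a t q.2))

theorem rescaledMul_dil_inv {t : ℝ} (ht : 0 < t) (y w : Fin d → ℝ) :
    D.rescaledMul t (dil D.a t⁻¹ y, dil D.a t⁻¹ w) = dil D.a t⁻¹ (G.mul y w) := by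
  simp only [rescaledMul, dil_dil_inv ht]

theorem continuous_rescaledMul (t : ℝ) : Continuous (D.rescaledMul t) :=
  (continuous_dil _ _).comp
    (G.continuous_mul.comp ((continuous_dil _ _).prodMap (continuous_dil _ _)))

theorem tendstoLocallyUniformly_rescaledMul :
    TendstoLocallyUniformly D.rescaledMul (fun q => D.bullet q.1 q.2) atTop := by
  refine tendstoLocallyUniformly_pi fun i => ?_
  obtain ⟨p, hp⟩ := G.poly_mul i
  set w : Fin d ⊕ Fin d → ℝ := Sum.elim D.a D.a
  have hcoord : ∀ (t : ℝ) (v : Fin d ⊕ Fin d → ℝ),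
      t⁻¹ ^ D.a i * MvPolynomial.eval (fun j => t ^ w j * v j) p =
        D.rescaledMul t (v ∘ Sum.inl, v ∘ Sum.inr) i := by
    intro t v
    have : (fun j => t ^ w j * v j) =
        Sum.elim (dil D.a t (v ∘ Sum.inl)) (dil D.a t (v ∘ Sum.inr)) := by
      funext j
      cases j <;> rfl
    rw [this, ← hp]
    rfl
  have hlim := tendstoLocallyUniformly_mul_eval_mul p (fun t => t⁻¹ ^ D.a i) (fun t j => t ^ w j)
    (f := fun v => D.bullet (v ∘ Sum.inl) (v ∘ Sum.inr) i) fun v => by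
      simp only [hcoord]
      exact tendsto_pi_nhds.1 (D.tendsto_mul (v ∘ Sum.inl) (v ∘ Sum.inr)) i
  simp only [hcoord] at hlim
  exact hlim.comp _
    (Homeomorph.sumArrowHomeomorphProdArrow (ι := Fin d) (ι' := Fin d) (X := ℝ)).symm.continuous

theorem continuous_bullet : Continuous fun q : (Fin d → ℝ) × (Fin d → ℝ) => D.bullet q.1 q.2 :=
  D.tendstoLocallyUniformly_rescaledMul.continuous
    (Frequently.of_forall D.continuous_rescaledMul)

theorem continuous_bullet_right (x : Fin d → ℝ) : Continuous (D.bullet x) :=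
  D.continuous_bullet.comp (continuous_const.prodMk continuous_id)

theorem tendsto_rescaledMul {z w : ℝ → Fin d → ℝ} {z₀ w₀ : Fin d → ℝ}
    (hz : Tendsto z atTop (𝓝 z₀)) (hw : Tendsto w atTop (𝓝 w₀)) :
    Tendsto (fun t => D.rescaledMul t (z t, w t)) atTop (𝓝 (D.bullet z₀ w₀)) :=
  D.tendstoLocallyUniformly_rescaledMul.tendsto_comp D.continuous_bullet.continuousAt
    (hz.prodMk_nhds hw)

theorem bullet_zero_left (y : Fin d → ℝ) : D.bullet 0 y = y :=
  tendsto_nhds_unique_of_eventuallyEq (D.tendsto_mul 0 y) tendsto_const_nhds <|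
    (eventually_gt_atTop 0).mono fun t ht => by
      simp only [dil_zero, G.zero_mul', dil_inv_dil ht]

theorem bullet_zero_right (y : Fin d → ℝ) : D.bullet y 0 = y :=
  tendsto_nhds_unique_of_eventuallyEq (D.tendsto_mul y 0) tendsto_const_nhds <|
    (eventually_gt_atTop 0).mono fun t ht => by
      simp only [dil_zero, G.mul_zero', dil_inv_dil ht]

theorem bullet_bulletInv (z : Fin d → ℝ) : D.bullet z (D.bulletInv z) = 0 :=
  tendsto_nhds_unique_of_eventuallyEq (D.tendsto_rescaledMul tendsto_const_nhds (D.tendsto_inv z))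
    tendsto_const_nhds <| (eventually_gt_atTop 0).mono fun t ht => by
      simp only [rescaledMul, dil_dil_inv ht, G.mul_inv', dil_zero]

theorem bullet_assoc (x y z : Fin d → ℝ) :
    D.bullet (D.bullet x y) z = D.bullet x (D.bullet y z) :=
  tendsto_nhds_unique_of_eventuallyEq
    (D.tendsto_rescaledMul (D.tendsto_mul x y) tendsto_const_nhds)
    (D.tendsto_rescaledMul tendsto_const_nhds (D.tendsto_mul y z)) <|
    (eventually_gt_atTop 0).mono fun t ht => by
      simp only [rescaledMul, dil_dil_inv ht, G.mul_assoc']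

theorem bullet_bulletInv_bullet (x z : Fin d → ℝ) :
    D.bullet x (D.bullet (D.bulletInv x) z) = z := by
  rw [← D.bullet_assoc, D.bullet_bulletInv, D.bullet_zero_left]

theorem eventually_forall_dist_rescaledMul_lt {K : Set (Fin d → ℝ)} (hK : IsCompact K)
    {W : ℝ → Set (Fin d → ℝ)} (hW : Tendsto W atTop (𝓝 0).smallSets) {ε : ℝ} (hε : 0 < ε) :
    ∀ᶠ t in atTop, ∀ z ∈ K, ∀ w ∈ W t, dist (D.rescaledMul t (z, w)) z < ε := by
  have hKB : IsCompact (K ×ˢ closedBall (0 : Fin d → ℝ) 1) := hK.prod (isCompact_closedBall 0 1)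
  obtain ⟨η, hη, hbullet⟩ := Metric.uniformContinuousOn_iff.1
    (hKB.uniformContinuousOn_of_continuous D.continuous_bullet.continuousOn) (ε / 2) (half_pos hε)
  have hunif := Metric.tendstoUniformlyOn_iff.1 (tendstoLocallyUniformly_iff_forall_isCompact.1
    D.tendstoLocallyUniformly_rescaledMul _ hKB) (ε / 2) (half_pos hε)
  filter_upwards [hunif, tendsto_smallSets_iff.1 hW _ (ball_mem_nhds 0 (lt_min hη one_pos))]
    with t hconv hsmall z hz w hw
  have hw' : dist w 0 < min η 1 := hsmall hw
  have hzw : (z, w) ∈ K ×ˢ closedBall (0 : Fin d → ℝ) 1 :=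
    ⟨hz, mem_closedBall.2 (hw'.le.trans (min_le_right _ _))⟩
  have hz0 : (z, (0 : Fin d → ℝ)) ∈ K ×ˢ closedBall (0 : Fin d → ℝ) 1 :=
    ⟨hz, mem_closedBall_self zero_le_one⟩
  have hnear : dist (D.bullet z w) z < ε / 2 := by
    simpa only [D.bullet_zero_right] using hbullet _ hzw _ hz0 (by
      simpa [Prod.dist_eq] using hw'.trans_le (min_le_left _ _))
  calc dist (D.rescaledMul t (z, w)) z
      ≤ dist (D.rescaledMul t (z, w)) (D.bullet z w) + dist (D.bullet z w) z := dist_triangle _ _ _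
    _ < ε / 2 + ε / 2 := add_lt_add (dist_comm _ (D.bullet z w) ▸ hconv _ hzw) hnear
    _ = ε := add_halves ε

theorem eventually_forall_mul_lt {ψ : (Fin d → ℝ) → ℝ} (hψ : Continuous ψ) {s : ℝ}
    (hs : IsCompact {y | ψ y ≤ s}) {K : Set (Fin d → ℝ)} (hK : IsCompact K) {ε : ℝ}
    (hε : 0 < ε) :
    ∀ᶠ t in atTop, ∀ y, ψ (dil D.a t⁻¹ y) < s → ∀ k ∈ K, ψ (dil D.a t⁻¹ (G.mul y k)) < s + ε := by
  obtain ⟨η, hη, hψη⟩ := hs.exists_forall_dist_lt_of_continuous hψ hε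
  filter_upwards [D.eventually_forall_dist_rescaledMul_lt hs
    (tendsto_image_dil_inv_smallSets D.a_pos hK) hη, eventually_gt_atTop 0] with t ht ht0 y hy k hk
  have hclose := hψη _ hy.le _ (ht _ hy.le _ (mem_image_of_mem _ hk))
  rw [D.rescaledMul_dil_inv ht0, Real.dist_eq] at hclose
  linarith [(abs_lt.1 hclose).2]

end ApproxDil

section Homogeneous

variable {d : ℕ} {a : Fin d → ℝ} {N : (Fin d → ℝ) → ℝ} {κ : ℝ}

theorem exists_eq_dil_of_ne_zero (ha : ∀ i, 0 < a i) {u : Fin d → ℝ} (hu : u ≠ 0) :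
    ∃ τ > 0, ∃ v ∈ sphere (0 : Fin d → ℝ) 1, u = dil a τ v := by
  obtain ⟨i₀, hi₀⟩ : ∃ i, u i ≠ 0 := by
    by_contra! h
    exact hu (funext h)
  -- `τ = maxᵢ |u i| ^ (a i)⁻¹` is the size of `u` that scales linearly under `dil a`.
  obtain ⟨j, -, hj⟩ :=
    Finset.univ.exists_max_image (fun i => |u i| ^ (a i)⁻¹) ⟨i₀, Finset.mem_univ _⟩
  set τ := |u j| ^ (a j)⁻¹
  have hτ : 0 < τ := (by positivity : 0 < |u i₀| ^ (a i₀)⁻¹).trans_le (hj i₀ (Finset.mem_univ _))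
  have hτa : ∀ i, |u i| ≤ τ ^ a i := fun i =>
    calc |u i| = (|u i| ^ (a i)⁻¹) ^ a i := (Real.rpow_inv_rpow (abs_nonneg _) (ha i).ne').symm
      _ ≤ τ ^ a i := Real.rpow_le_rpow (by positivity) (hj i (Finset.mem_univ _)) (ha i).le
  have hcoord : ∀ i, ‖dil a τ⁻¹ u i‖ = |u i| / τ ^ a i := fun i => by
    rw [dil, norm_mul, Real.norm_eq_abs, Real.norm_eq_abs, abs_of_pos (by positivity),
      Real.inv_rpow hτ.le, inv_mul_eq_div]
  refine ⟨τ, hτ, dil a τ⁻¹ u, mem_sphere_zero_iff_norm.2 (le_antisymm ?_ ?_),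
    (dil_dil_inv hτ u).symm⟩
  · refine (pi_norm_le_iff_of_nonneg zero_le_one).2 fun i => ?_
    rw [hcoord, div_le_one (by positivity)]
    exact hτa i
  · have huj : u j ≠ 0 := fun h => hτ.ne' (by simp [τ, h, (ha j).ne'])
    refine le_trans ?_ (norm_le_pi_norm _ j)
    rw [hcoord, Real.rpow_inv_rpow (abs_nonneg _) (ha j).ne', div_self (abs_ne_zero.2 huj)]

theorem isCompact_setOf_le_of_homogeneous (ha : ∀ i, 0 < a i) (hN : Continuous N)
    (hpos : ∀ u ≠ 0, 0 < N u) (hκ : 0 < κ) (hhom : ∀ τ > 0, ∀ u, N (dil a τ u) = τ ^ κ * N u)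
    (R : ℝ) : IsCompact {u | N u ≤ R} := by
  obtain ⟨m, hm, hmN⟩ := (isCompact_sphere (0 : Fin d → ℝ) 1).exists_forall_le' hN.continuousOn
    fun v hv => hpos v (ne_zero_of_mem_sphere one_ne_zero ⟨v, hv⟩)
  set T := (|R| / m) ^ κ⁻¹
  refine (isCompact_univ_pi fun i => isCompact_closedBall (0 : ℝ) (T ^ a i)).of_isClosed_subset
    (isClosed_le hN continuous_const) fun u hu i _ => ?_
  rcases eq_or_ne u 0 with rfl | hu0
  · simpa using Real.rpow_nonneg (by positivity) _
  obtain ⟨τ, hτ, v, hv, rfl⟩ := exists_eq_dil_of_ne_zero ha hu0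
  have hτT : τ ≤ T := by
    have hτκ : τ ^ κ * m ≤ |R| :=
      calc τ ^ κ * m ≤ τ ^ κ * N v := mul_le_mul_of_nonneg_left (hmN v hv) (by positivity)
        _ = N (dil a τ v) := (hhom τ hτ v).symm
        _ ≤ |R| := (show N (dil a τ v) ≤ R from hu).trans (le_abs_self R)
    calc τ = (τ ^ κ) ^ κ⁻¹ := (Real.rpow_rpow_inv hτ.le hκ.ne').symm
      _ ≤ T := Real.rpow_le_rpow (by positivity) ((le_div_iff₀ hm).2 hτκ) (inv_nonneg.2 hκ.le)
  have hvi : ‖v i‖ ≤ 1 := (norm_le_pi_norm v i).trans (mem_sphere_zero_iff_norm.1 hv).le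
  rw [mem_closedBall_zero_iff, dil, norm_mul, Real.norm_of_nonneg (by positivity)]
  calc τ ^ a i * ‖v i‖ ≤ T ^ a i * 1 := by gcongr; exact (ha i).le
    _ = T ^ a i := mul_one _

theorem image_dil_setOf_lt (hhom : ∀ τ > 0, ∀ u, N (dil a τ u) = τ ^ κ * N u) {τ : ℝ}
    (hτ : 0 < τ) (s : ℝ) : dil a τ '' {u | N u < s} = {u | N u < τ ^ κ * s} := by
  rw [← preimage_dil_inv hτ]
  ext u
  change N (dil a τ⁻¹ u) < s ↔ N u < τ ^ κ * s
  rw [← mul_lt_mul_iff_right₀ (Real.rpow_pos_of_pos hτ κ), ← hhom τ hτ, dil_dil_inv hτ]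

theorem continuousAt_measureReal_setOf_lt (hκ : 0 < κ)
    (hhom : ∀ τ > 0, ∀ u, N (dil a τ u) = τ ^ κ * N u) {r : ℝ} (hr : 0 < r) :
    ContinuousAt (fun s => volume.real {u | N u < s}) r := by
  have hscale : ∀ s > 0, ((s / r) ^ κ⁻¹) ^ (∑ i, a i) * volume.real {u | N u < r} =
      volume.real {u | N u < s} := fun s hs => by
    have hτ : 0 < (s / r) ^ κ⁻¹ := by positivity
    rw [← measureReal_image_dil hτ, image_dil_setOf_lt hhom hτ,
      Real.rpow_inv_rpow (by positivity) hκ.ne', div_mul_cancel₀ _ hr.ne']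
  have hcont : ContinuousAt (fun s => ((s / r) ^ κ⁻¹) ^ (∑ i, a i) * volume.real {u | N u < r}) r :=
    (((continuousAt_id.div_const r).rpow_const (Or.inl (by simp [hr.ne']))).rpow_const
      (Or.inl (by simp [hr.ne']))).mul_const _
  exact hcont.congr (eventually_of_mem (Ioi_mem_nhds hr) hscale)

end Homogeneous

namespace ApproxDil

variable {d : ℕ} {G : PolyGroup d} (D : ApproxDil d G) {Γ U : Set (Fin d → ℝ)}
  {ψ : (Fin d → ℝ) → ℝ}

theorem eventually_ncard_mul_measureReal_le
    (hHaar : ∀ x, MeasurePreserving (fun y => G.mul x y) volume volume)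
    (hΓdisc : ∀ K : Set (Fin d → ℝ), IsCompact K → (Γ ∩ K).Finite) (hUcomp : IsCompact U)
    (hUdisj : ∀ γ ∈ Γ, ∀ γ' ∈ Γ, γ ≠ γ' →
      volume (((fun y => G.mul γ y) '' U) ∩ ((fun y => G.mul γ' y) '' U)) = 0)
    (hψ : Continuous ψ) (hψK : ∀ s, IsCompact {y | ψ y ≤ s}) (r : ℝ) {ε : ℝ} (hε : 0 < ε) :
    ∀ᶠ t in atTop, ({γ ∈ Γ | ψ (dil D.a t⁻¹ γ) < r}.ncard : ℝ) * volume.real U ≤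
      t ^ (∑ i, D.a i) * volume.real {y | ψ y < r + ε} := by
  filter_upwards [D.eventually_forall_mul_lt hψ (hψK r) hUcomp hε, eventually_gt_atTop 0]
    with t ht ht0
  rw [← measureReal_image_dil ht0, ← preimage_dil_inv ht0]
  refine G.ncard_mul_measureReal_le hHaar hUcomp.measurableSet hUcomp.measure_lt_top.ne hUdisj
    (finite_sep_dil_inv_lt hΓdisc (hψK r) ht0) (sep_subset _ _) ?_ fun γ hγ => ?_
  · rw [preimage_dil_inv ht0]
    exact (((hψK (r + ε)).image (continuous_dil D.a t)).measure_lt_top.trans_le'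
      (measure_mono (image_mono fun y (hy : ψ y < r + ε) => hy.le))).ne
  · rintro _ ⟨u, hu, rfl⟩
    exact ht γ hγ.2 u hu

theorem eventually_measureReal_le_ncard_mul
    (hHaar : ∀ x, MeasurePreserving (fun y => G.mul x y) volume volume)
    (hΓdisc : ∀ K : Set (Fin d → ℝ), IsCompact K → (Γ ∩ K).Finite) (hUcomp : IsCompact U)
    (hUcover : ⋃ γ ∈ Γ, (fun y => G.mul γ y) '' U = Set.univ)
    (hψ : Continuous ψ) (hψK : ∀ s, IsCompact {y | ψ y ≤ s}) (r : ℝ) {ε : ℝ} (hε : 0 < ε) :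
    ∀ᶠ t in atTop, t ^ (∑ i, D.a i) * volume.real {y | ψ y < r - ε} ≤
      ({γ ∈ Γ | ψ (dil D.a t⁻¹ γ) < r}.ncard : ℝ) * volume.real U := by
  filter_upwards [D.eventually_forall_mul_lt hψ (hψK (r - ε)) (hUcomp.image G.continuous_inv) hε,
    eventually_gt_atTop 0] with t ht ht0
  rw [← measureReal_image_dil ht0, ← preimage_dil_inv ht0]
  refine G.measureReal_le_ncard_mul hHaar hUcomp.measurableSet hUcomp.measure_lt_top.ne
    (finite_sep_dil_inv_lt hΓdisc (hψK r) ht0) fun y hy => ?_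
  have hy' : y ∈ ⋃ γ ∈ Γ, (fun y => G.mul γ y) '' U := hUcover ▸ mem_univ y
  simp only [mem_iUnion, mem_image] at hy'
  obtain ⟨γ, hγ, u, hu, rfl⟩ := hy'
  have hlt := ht _ hy (G.inv u) (mem_image_of_mem _ hu)
  rw [G.mul_assoc', G.mul_inv', G.mul_zero', sub_add_cancel] at hlt
  exact mem_biUnion ⟨hγ, hlt⟩ ⟨u, hu, rfl⟩

theorem tendsto_measureReal_mul_ncard
    (hHaar : ∀ x, MeasurePreserving (fun y => G.mul x y) volume volume)
    (hΓdisc : ∀ K : Set (Fin d → ℝ), IsCompact K → (Γ ∩ K).Finite) (hUcomp : IsCompact U)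
    (hUcover : ⋃ γ ∈ Γ, (fun y => G.mul γ y) '' U = Set.univ)
    (hUdisj : ∀ γ ∈ Γ, ∀ γ' ∈ Γ, γ ≠ γ' →
      volume (((fun y => G.mul γ y) '' U) ∩ ((fun y => G.mul γ' y) '' U)) = 0)
    (hψ : Continuous ψ) (hψK : ∀ s, IsCompact {y | ψ y ≤ s}) {r : ℝ}
    (hV : ContinuousAt (fun s => volume.real {y | ψ y < s}) r) :
    Tendsto (fun t : ℝ => (volume U).toReal * t ^ (-(∑ i, D.a i)) *
        (({y | ψ y < r} ∩ (dil D.a t⁻¹ '' Γ)).ncard : ℝ))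
      atTop (𝓝 ((volume {y | ψ y < r}).toReal)) := by
  refine tendsto_of_forall_eventually_le_of_continuousAt hV fun ε hε => ?_
  filter_upwards [D.eventually_measureReal_le_ncard_mul hHaar hΓdisc hUcomp hUcover hψ hψK r hε,
    D.eventually_ncard_mul_measureReal_le hHaar hΓdisc hUcomp hUdisj hψ hψK r hε,
    eventually_gt_atTop 0] with t hlo hup ht
  have htL : 0 < t ^ (∑ i, D.a i) := Real.rpow_pos_of_pos ht _
  rw [ncard_setOf_inter_image_dil_inv ht, Real.rpow_neg ht.le, ← measureReal_def]
  constructor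
  · calc _ ≤ {γ ∈ Γ | ψ (dil D.a t⁻¹ γ) < r}.ncard * volume.real U / t ^ (∑ i, D.a i) :=
          (le_div_iff₀' htL).2 hlo
      _ = _ := by ring
  · calc _ = {γ ∈ Γ | ψ (dil D.a t⁻¹ γ) < r}.ncard * volume.real U / t ^ (∑ i, D.a i) := by ring
      _ ≤ _ := (div_le_iff₀' htL).2 hup

end ApproxDil

theorem stmt_5_general (d : ℕ) (G : PolyGroup d)
    (hHaar : ∀ x, MeasurePreserving (fun y => G.mul x y) volume volume)
    (β : Fin d → ℝ) (hβ : ∀ i, 0 < β i ∧ β i < 2)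
    (D : ApproxDil d G) (hDa : ∀ i, D.a i = (β i)⁻¹)
    (hHaarB : ∀ x, MeasurePreserving (fun y => D.bullet x y) volume volume)
    (b : ℝ) (hble : ∀ i, β i ≤ b)
    (N : (Fin d → ℝ) → ℝ) (hNcont : Continuous N) (hNnn : ∀ u, 0 ≤ N u)
    (hN0 : ∀ x, N x = 0 ↔ x = 0)
    (hNscale : ∀ t : ℝ, 0 < t → ∀ u, N (dil D.a t u) = t ^ (1 / b) * N u)
    (Γ : Set (Fin d → ℝ))
    (hΓdisc : ∀ K : Set (Fin d → ℝ), IsCompact K → (Γ ∩ K).Finite)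
    (U : Set (Fin d → ℝ)) (hUcomp : IsCompact U)
    (hUcover : ⋃ γ ∈ Γ, (fun y => G.mul γ y) '' U = Set.univ)
    (hUdisj : ∀ γ ∈ Γ, ∀ γ' ∈ Γ, γ ≠ γ' →
      volume (((fun y => G.mul γ y) '' U) ∩ ((fun y => G.mul γ' y) '' U)) = 0)
    (x : Fin d → ℝ) (r : ℝ) (hr : 0 ≤ r) :
    Tendsto (fun t : ℝ =>
        (volume U).toReal * t ^ (-(∑ i, (β i)⁻¹)) *
          (({y | N (D.bullet (D.bulletInv x) y) < r} ∩ (dil D.a t⁻¹ '' Γ)).ncard : ℝ))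
      atTop (𝓝 ((volume {y | N (D.bullet (D.bulletInv x) y) < r}).toReal)) := by
  rcases hr.eq_or_lt with rfl | hr
  · simp [fun y => (hNnn y).not_gt]
  -- `0 < b` needs `0 < d`; for `d = 0` the space is a point and any degree of homogeneity works.
  obtain ⟨κ, hκ, hhom⟩ : ∃ κ > (0 : ℝ), ∀ τ > (0 : ℝ), ∀ u, N (dil D.a τ u) = τ ^ κ * N u := by
    rcases isEmpty_or_nonempty (Fin d) with hd | ⟨⟨i⟩⟩
    · exact ⟨1, one_pos, fun τ _ u => by rw [Subsingleton.elim u 0, dil_zero, (hN0 0).2 rfl,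
        mul_zero]⟩
    · exact ⟨1 / b, one_div_pos.2 ((hβ i).1.trans_le (hble i)), hNscale⟩
  have hpos : ∀ u ≠ 0, 0 < N u := fun u hu => (hNnn u).lt_of_ne' (mt (hN0 u).1 hu)
  have hψ : Continuous fun y => N (D.bullet (D.bulletInv x) y) :=
    hNcont.comp (D.continuous_bullet_right _)
  have hvol : (fun s => volume.real {y | N (D.bullet (D.bulletInv x) y) < s}) =
      fun s => volume.real {u | N u < s} := funext fun s => by
    rw [measureReal_def, measureReal_def, ← (hHaarB (D.bulletInv x)).measure_preimage
      (isOpen_lt hNcont continuous_const).measurableSet.nullMeasurableSet]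
    rfl
  rw [show ∑ i, (β i)⁻¹ = ∑ i, D.a i by simp only [hDa]]
  refine D.tendsto_measureReal_mul_ncard hHaar hΓdisc hUcomp hUcover hUdisj hψ (fun s => ?_)
    (hvol ▸ continuousAt_measureReal_setOf_lt hκ hhom hr)
  exact ((isCompact_setOf_le_of_homogeneous D.a_pos hNcont hpos hκ hhom s).image
    (D.continuous_bullet_right x)).of_isClosed_subset (isClosed_le hψ continuous_const)
    fun y hy => ⟨_, hy, D.bullet_bulletInv_bullet x y⟩

theorem stmt_5 (d : ℕ) (G : PolyGroup d)
    (hHaar : ∀ x, MeasurePreserving (fun y => G.mul x y) volume volume)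
    (β : Fin d → ℝ) (hβ : ∀ i, 0 < β i ∧ β i < 2)
    (D : ApproxDil d G) (hDa : ∀ i, D.a i = (β i)⁻¹)
    (hHaarB : ∀ x, MeasurePreserving (fun y => D.bullet x y) volume volume)
    (b : ℝ) (hble : ∀ i, β i ≤ b)
    (N : (Fin d → ℝ) → ℝ) (hNcont : Continuous N) (hNnn : ∀ u, 0 ≤ N u)
    (hNtri : ∀ x y, N (D.bullet x y) ≤ N x + N y)
    (hNinv : ∀ x, N (D.bulletInv x) = N x)
    (hN0 : ∀ x, N x = 0 ↔ x = 0)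
    (hNscale : ∀ t : ℝ, 0 < t → ∀ u, N (dil D.a t u) = t ^ (1 / b) * N u)
    (Γ : Set (Fin d → ℝ)) (hΓ0 : (0 : Fin d → ℝ) ∈ Γ)
    (hΓmul : ∀ x ∈ Γ, ∀ y ∈ Γ, G.mul x y ∈ Γ) (hΓinv : ∀ x ∈ Γ, G.inv x ∈ Γ)
    (hΓdisc : ∀ K : Set (Fin d → ℝ), IsCompact K → (Γ ∩ K).Finite)
    (U : Set (Fin d → ℝ)) (hUcomp : IsCompact U)
    (hUcover : ⋃ γ ∈ Γ, (fun y => G.mul γ y) '' U = Set.univ)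
    (hUdisj : ∀ γ ∈ Γ, ∀ γ' ∈ Γ, γ ≠ γ' →
      volume (((fun y => G.mul γ y) '' U) ∩ ((fun y => G.mul γ' y) '' U)) = 0)
    (x : Fin d → ℝ) (r : ℝ) (hr : 0 ≤ r) :
    Tendsto (fun t : ℝ =>
        (volume U).toReal * t ^ (-(∑ i, (β i)⁻¹)) *
          (({y | N (D.bullet (D.bulletInv x) y) < r} ∩ (dil D.a t⁻¹ '' Γ)).ncard : ℝ))
      atTop (𝓝 ((volume {y | N (D.bullet (D.bulletInv x) y) < r}).toReal)) :=
  stmt_5_general d G hHaar β hβ D hDa hHaarB b hble N hNcont hNnn hN0 hNscale Γ hΓdisc U hUcomp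
    hUcover hUdisj x r hr
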